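/- arXiv:2409.06138 — 3 statements merged into one kernel-verified Lean document; each statement's English description precedes it below -/
import Mathlib

section
/- Let X be a finite graph admitting an automorphism ρ that is (m,p)-semiregular for a prime p, i.e., ρ has exactly m orbits on V(X), each of size p. Let 𝓟 be the set of orbits of ⟨ρ⟩ and let C be a cycle of length k in the quotient graph X_𝓟. Then the subgraph of X induced by the union of the orbits in C (the lift of C) either contains a cycle of length kp, or it consists of p pairwise disjoint k-cycles; moreover, in the latter case, d(S,S') = 1 for every edge {S,S'} of C, where d(S,S') is the valency of the regular bipartite graph X[S,S']. -/
/-- The projection of a vertex to its orbit under the group generated by a permutation. -/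
def orbitProj {V : Type*} (f : Equiv.Perm V) (x : V) :
    Quotient (MulAction.orbitRel (Subgroup.zpowers f) V) :=
  Quotient.mk (MulAction.orbitRel (Subgroup.zpowers f) V) x

/-- The quotient graph of `X` with respect to the orbits of `⟨f⟩`. -/
def orbitQuotientGraph {V : Type*} (X : SimpleGraph V) (f : Equiv.Perm V) :
    SimpleGraph (Quotient (MulAction.orbitRel (Subgroup.zpowers f) V)) where
  Adj A B := A ≠ B ∧ ∃ a b : V, orbitProj f a = A ∧ orbitProj f b = B ∧ X.Adj a b
  symm := by
    constructor
    rintro A B ⟨hne, a, b, ha, hb, hab⟩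
    exact ⟨hne.symm, b, a, hb, ha, hab.symm⟩
  loopless := by constructor; rintro A ⟨hne, _⟩; exact hne rfl


/-!
Lift the cycle `C = S₀ S₁ ⋯ S₀` to a walk `v₀ v₁ ⋯ v_k` of `X` with `vᵢ ∈ Sᵢ`; then
`v_k = ρ ^ t v₀` for some `t`. If `p ∤ t`, going round `C` `p` times, each round shifted by `ρ ^ t`,
gives a cycle of length `kp`: since `p` is prime, the rounds only close up after `p` of them.
If `p ∣ t`, the lift is a `k`-cycle whose translates under `⟨ρ⟩` are `p` disjoint `k`-cycles
covering the lift of `C`. If moreover some vertex of `Sᵢ` has two neighbours in `Sᵢ₊₁`, rerouting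
the lift through the other one changes `t` by a non-multiple of `p`, which is the first case.
-/

open SimpleGraph Function

namespace Function

theorem iterate_eq_iterate_iff_modEq {α : Type*} {f : α → α} {x : α}
    (hx : 0 < minimalPeriod f x) {a b : ℕ} :
    f^[a] x = f^[b] x ↔ a ≡ b [MOD minimalPeriod f x] := by
  rw [← iterate_mod_minimalPeriod_eq, ← iterate_mod_minimalPeriod_eq (n := b),
    iterate_eq_iterate_iff_of_lt_minimalPeriod (Nat.mod_lt _ hx) (Nat.mod_lt _ hx)]
  rfl

end Function

namespace Equiv.Perm

variable {V : Type*} {p : ℕ}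

theorem minimalPeriod_eq_natCard_orbit [Finite V] (f : Equiv.Perm V) (x : V) :
    minimalPeriod f x = Nat.card (MulAction.orbit (Subgroup.zpowers f) x) := by
  have := Fintype.ofFinite (MulAction.orbit (Subgroup.zpowers f) x)
  rw [Nat.card_eq_fintype_card, ← MulAction.minimalPeriod_eq_card]
  rfl

theorem pow_apply_eq_pow_apply_iff {f : Equiv.Perm V} (hf : ∀ x, minimalPeriod f x = p)
    (hp : 0 < p) {x : V} {a b : ℕ} : (f ^ a) x = (f ^ b) x ↔ a ≡ b [MOD p] := by
  rw [coe_pow, coe_pow, iterate_eq_iterate_iff_modEq (hf x ▸ hp), hf]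

theorem pow_apply_eq_self_iff {f : Equiv.Perm V} (hf : ∀ x, minimalPeriod f x = p) {x : V} {a : ℕ} :
    (f ^ a) x = x ↔ p ∣ a := by
  rw [coe_pow, ← hf x, ← isPeriodicPt_iff_minimalPeriod_dvd]
  rfl

end Equiv.Perm

section orbitProj

variable {V : Type*} {f : Equiv.Perm V}

theorem orbitProj_pow_apply (n : ℕ) (x : V) : orbitProj f ((f ^ n) x) = orbitProj f x :=
  Quotient.sound ⟨⟨f ^ n, Subgroup.npow_mem_zpowers f n⟩, rfl⟩

theorem orbitProj_eq_orbitProj_iff [Finite V] {x y : V} :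
    orbitProj f x = orbitProj f y ↔ ∃ n : ℕ, (f ^ n) y = x := by
  refine ⟨fun h => ?_, fun ⟨n, hn⟩ => hn ▸ orbitProj_pow_apply n y⟩
  obtain ⟨⟨g, hg⟩, rfl⟩ := Quotient.exact h
  obtain ⟨n, rfl⟩ := Subgroup.mem_zpowers_iff.mp hg
  exact Equiv.Perm.SameCycle.exists_nat_pow_eq ⟨n, rfl⟩

theorem exists_lt_pow_apply_eq [Finite V] {p : ℕ} (hf : ∀ x, minimalPeriod f x = p) (hp : 0 < p)
    {x y : V} (h : orbitProj f x = orbitProj f y) : ∃ j < p, (f ^ j) y = x := by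
  obtain ⟨n, rfl⟩ := orbitProj_eq_orbitProj_iff.mp h
  refine ⟨n % p, Nat.mod_lt n hp, ?_⟩
  rw [Equiv.Perm.pow_apply_eq_pow_apply_iff hf hp]
  exact Nat.mod_modEq n p

end orbitProj

namespace SimpleGraph

variable {V : Type*} {G : SimpleGraph V}

theorem exists_isCycle_of_injOn (u : ℕ → V) {N : ℕ} (hN : 3 ≤ N)
    (hadj : ∀ i < N, G.Adj (u i) (u (i + 1))) (hclosed : u N = u 0)
    (hinj : Set.InjOn u (Set.Iio N)) :
    ∃ w : G.Walk (u 0) (u 0), w.IsCycle ∧ w.length = N ∧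
      ∀ x, x ∈ w.support ↔ ∃ i < N, u i = x := by
  set L := (List.range (N + 1)).map u
  have hne : L ≠ [] := by simp [L]
  have hchain : L.IsChain G.Adj := (List.isChain_map u).2 ((List.isChain_range_succ _ _).2 hadj)
  let w : G.Walk (u 0) (u 0) :=
    (Walk.ofSupport L hne hchain).copy (by simp [L]) (by simp [L, hclosed])
  have hsupp : w.support = L := by simp [w]
  have hlen : w.length = N := by simp [w, L]
  refine ⟨w, Walk.isCycle_iff_isPath_tail_and_le_length.2 ⟨Walk.IsPath.mk' ?_, hlen ▸ hN⟩, hlen,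
    fun x => ?_⟩
  · rw [Walk.support_tail_of_not_nil _ (Walk.not_nil_iff_lt_length.2 (by omega)), hsupp]
    simp only [L, List.range_succ_eq_map, List.map_cons, List.tail_cons, List.map_map]
    refine (List.nodup_map_iff_inj_on List.nodup_range).2 fun i hi j hj hij => ?_
    simp only [List.mem_range, Function.comp_apply] at hi hj hij
    have key : ∀ {a b}, a < N → b < N → u (a + 1) = u (b + 1) → a + 1 < N → a = b := by
      intro a b ha hb hab haN
      rcases (by omega : b + 1 < N ∨ b + 1 = N) with hbN | hbN
      · have := hinj haN hbN hab
        omega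
      · rw [hbN, hclosed] at hab
        have := hinj haN (by omega : 0 < N) hab
        omega
    rcases (by omega : i + 1 < N ∨ i + 1 = N) with hiN | hiN
    · exact key hi hj hij hiN
    · rcases (by omega : j + 1 < N ∨ j + 1 = N) with hjN | hjN
      · exact (key hj hi hij.symm hjN).symm
      · omega
  · simp only [hsupp, L, List.mem_map, List.mem_range]
    refine ⟨fun ⟨i, hi, hix⟩ => ?_, fun ⟨i, hi, hix⟩ => ⟨i, by omega, hix⟩⟩
    rcases Nat.lt_succ_iff_lt_or_eq.mp hi with hi | rfl
    · exact ⟨i, hi, hix⟩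
    · exact ⟨0, by omega, hclosed ▸ hix⟩

theorem Walk.IsCycle.injOn_getVert_Iio {w : V} {c : G.Walk w w} (hc : c.IsCycle) :
    Set.InjOn c.getVert (Set.Iio c.length) :=
  hc.getVert_injOn'.mono fun i (hi : i < c.length) => show i ≤ c.length - 1 by omega

theorem Walk.IsCycle.exists_getVert_eq {w x : V} {c : G.Walk w w} (hc : c.IsCycle)
    (hx : x ∈ c.support) : ∃ i < c.length, c.getVert i = x := by
  obtain ⟨i, rfl, hi⟩ := Walk.mem_support_iff_exists_getVert.1 hx
  rcases hi.lt_or_eq with hi | rfl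
  · exact ⟨i, hi, rfl⟩
  · exact ⟨0, Walk.not_nil_iff_lt_length.1 hc.not_nil, by simp⟩

end SimpleGraph

section Lift

variable {V : Type*} {X : SimpleGraph V} {f : Equiv.Perm V}

theorem adj_pow_apply_iff (haut : ∀ u v : V, X.Adj (f u) (f v) ↔ X.Adj u v) (n : ℕ) {a b : V} :
    X.Adj ((f ^ n) a) ((f ^ n) b) ↔ X.Adj a b := by
  induction n with
  | zero => rfl
  | succ n ih => rw [pow_succ', Equiv.Perm.mul_apply, Equiv.Perm.mul_apply, haut, ih]

theorem exists_adj_of_orbitQuotientGraph_adj [Finite V]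
    (haut : ∀ u v : V, X.Adj (f u) (f v) ↔ X.Adj u v)
    {S S' : MulAction.orbitRel.Quotient (Subgroup.zpowers f) V}
    (h : (orbitQuotientGraph X f).Adj S S') {a : V} (ha : orbitProj f a = S) :
    ∃ b, orbitProj f b = S' ∧ X.Adj a b := by
  obtain ⟨-, a₀, b₀, rfl, rfl, hab⟩ := h
  obtain ⟨n, rfl⟩ := orbitProj_eq_orbitProj_iff.mp ha
  exact ⟨(f ^ n) b₀, orbitProj_pow_apply n b₀, (adj_pow_apply_iff haut n).2 hab⟩

structure IsLift {A B : MulAction.orbitRel.Quotient (Subgroup.zpowers f) V}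
    (C : (orbitQuotientGraph X f).Walk A B) (v : ℕ → V) : Prop where
  orbitProj_eq : ∀ i, orbitProj f (v i) = C.getVert i
  adj : ∀ i < C.length, X.Adj (v i) (v (i + 1))

theorem exists_isLift [Finite V] (haut : ∀ u v : V, X.Adj (f u) (f v) ↔ X.Adj u v)
    {A B : MulAction.orbitRel.Quotient (Subgroup.zpowers f) V}
    (C : (orbitQuotientGraph X f).Walk A B) {a : V} (ha : orbitProj f a = A) :
    ∃ v, IsLift C v ∧ v 0 = a := by
  induction C generalizing a with
  | nil => exact ⟨fun _ => a, ⟨fun _ => ha, fun _ h => absurd h (Nat.not_lt_zero _)⟩, rfl⟩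
  | cons h C ih =>
    obtain ⟨b, hb, hab⟩ := exists_adj_of_orbitQuotientGraph_adj haut h ha
    obtain ⟨v, hv, rfl⟩ := ih hb
    refine ⟨fun | 0 => a | i + 1 => v i, ⟨fun i => ?_, fun i hi => ?_⟩, rfl⟩
    · cases i with
      | zero => exact ha
      | succ i => exact hv.orbitProj_eq i
    · cases i with
      | zero => exact hab
      | succ i => exact hv.adj i (by simpa using hi)

variable {A B : MulAction.orbitRel.Quotient (Subgroup.zpowers f) V} {v : ℕ → V}

theorem IsLift.twist {C : (orbitQuotientGraph X f).Walk A B} (hv : IsLift C v)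
    (haut : ∀ u v : V, X.Adj (f u) (f v) ↔ X.Adj u v) {i s : ℕ} (hi : i < C.length)
    (hs : X.Adj (v i) ((f ^ s) (v (i + 1)))) :
    ∃ v', IsLift C v' ∧ v' 0 = v 0 ∧ v' C.length = (f ^ s) (v C.length) := by
  refine ⟨fun n => if n ≤ i then v n else (f ^ s) (v n), ⟨fun n => ?_, fun n hn => ?_⟩,
    if_pos (Nat.zero_le i), if_neg (by omega)⟩
  · split_ifs
    · exact hv.orbitProj_eq n
    · rw [orbitProj_pow_apply, hv.orbitProj_eq n]
  · rcases lt_trichotomy n i with h | rfl | h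
    · simpa [h.le, Nat.succ_le_of_lt h] using hv.adj n hn
    · simpa using hs
    · simpa [h.not_ge, (Nat.lt_succ_of_lt h).not_ge, adj_pow_apply_iff haut] using hv.adj n hn

end Lift

section CycleLift

variable {V : Type*} {X : SimpleGraph V} {f : Equiv.Perm V} {p : ℕ}
  {A : MulAction.orbitRel.Quotient (Subgroup.zpowers f) V} {C : (orbitQuotientGraph X f).Walk A A}
  {v : ℕ → V}

theorem IsLift.eq_of_orbitProj_eq (hC : C.IsCycle) (hv : IsLift C v) {i j : ℕ} (hi : i < C.length)
    (hj : j < C.length) (h : orbitProj f (v i) = orbitProj f (v j)) : i = j :=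
  hC.injOn_getVert_Iio hi hj (by rwa [← hv.orbitProj_eq, ← hv.orbitProj_eq])

/-- Goes round a closed walk of length `k` repeatedly, the `q`-th round being the lift `v` shifted
by `f ^ (q * t)`; when `f ^ t` carries `v 0` to `v k`, consecutive rounds join up. -/
def unroll (f : Equiv.Perm V) (v : ℕ → V) (k t n : ℕ) : V :=
  (f ^ (n / k * t)) (v (n % k))

theorem orbitProj_unroll (hv : IsLift C v) (t n : ℕ) :
    orbitProj f (unroll f v C.length t n) = C.getVert (n % C.length) := by
  rw [unroll, orbitProj_pow_apply, hv.orbitProj_eq]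

theorem unroll_mul_add {k t : ℕ} (hk : 0 < k) (ht : (f ^ t) (v 0) = v k) (q : ℕ) {i : ℕ}
    (hi : i ≤ k) : unroll f v k t (q * k + i) = (f ^ (q * t)) (v i) := by
  rcases hi.lt_or_eq with hi | rfl
  · rw [unroll, Nat.add_comm, Nat.add_mul_div_right _ _ hk, Nat.div_eq_of_lt hi, Nat.zero_add,
      Nat.add_mul_mod_self_right, Nat.mod_eq_of_lt hi]
  · rw [show q * i + i = 0 + (q + 1) * i by ring, unroll, Nat.add_mul_div_right _ _ hk,
      Nat.add_mul_mod_self_right, Nat.zero_div, Nat.zero_mod, Nat.zero_add, Nat.add_one_mul,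
      pow_add, Equiv.Perm.mul_apply, ht]

theorem IsLift.adj_unroll (hv : IsLift C v) (haut : ∀ u v : V, X.Adj (f u) (f v) ↔ X.Adj u v)
    (hk : 0 < C.length) {t : ℕ} (ht : (f ^ t) (v 0) = v C.length) (n : ℕ) :
    X.Adj (unroll f v C.length t n) (unroll f v C.length t (n + 1)) := by
  have hi := Nat.mod_lt n hk
  rw [← Nat.div_add_mod' n C.length, Nat.add_assoc, unroll_mul_add hk ht _ hi.le,
    unroll_mul_add hk ht _ hi, adj_pow_apply_iff haut]
  exact hv.adj _ hi

theorem IsLift.injOn_unroll (hC : C.IsCycle) (hv : IsLift C v) (hp : p.Prime)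
    (hf : ∀ x, minimalPeriod f x = p) {t : ℕ} (ht : (f ^ t) (v 0) = v C.length) (hpt : ¬p ∣ t) :
    Set.InjOn (unroll f v C.length t) (Set.Iio (C.length * p)) := by
  intro n hn n' hn' h
  have hk := Walk.not_nil_iff_lt_length.1 hC.not_nil
  have hi := Nat.mod_lt n hk
  have hi' := Nat.mod_lt n' hk
  have hmod : n % C.length = n' % C.length := hC.injOn_getVert_Iio hi hi' <| by
    rw [← orbitProj_unroll hv t, ← orbitProj_unroll hv t, h]
  rw [← Nat.div_add_mod' n C.length, ← Nat.div_add_mod' n' C.length, unroll_mul_add hk ht _ hi.le,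
    unroll_mul_add hk ht _ hi'.le, ← hmod, Equiv.Perm.pow_apply_eq_pow_apply_iff hf hp.pos] at h
  have hq : n / C.length = n' / C.length :=
    (h.cancel_right_of_coprime (hp.coprime_iff_not_dvd.2 hpt)).eq_of_lt_of_lt
      (Nat.div_lt_of_lt_mul hn) (Nat.div_lt_of_lt_mul hn')
  rw [← Nat.div_add_mod' n C.length, ← Nat.div_add_mod' n' C.length, hq, hmod]

theorem IsLift.exists_isCycle_length_mul (hC : C.IsCycle) (hv : IsLift C v)
    (haut : ∀ u v : V, X.Adj (f u) (f v) ↔ X.Adj u v) (hp : p.Prime)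
    (hf : ∀ x, minimalPeriod f x = p) {t : ℕ} (ht : (f ^ t) (v 0) = v C.length) (hpt : ¬p ∣ t) :
    ∃ (x : V) (w : X.Walk x x), w.IsCycle ∧ w.length = C.length * p ∧
      ∀ y ∈ w.support, orbitProj f y ∈ C.support := by
  have hk := Walk.not_nil_iff_lt_length.1 hC.not_nil
  have hclosed : unroll f v C.length t (C.length * p) = unroll f v C.length t 0 := by
    rw [← Nat.add_zero (C.length * p), Nat.mul_comm, unroll_mul_add hk ht _ (Nat.zero_le _),
      (Equiv.Perm.pow_apply_eq_self_iff hf).2 (dvd_mul_right p t)]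
    simp [unroll]
  obtain ⟨w, hw, hlen, hsupp⟩ := exists_isCycle_of_injOn (unroll f v C.length t)
    (hC.three_le_length.trans (Nat.le_mul_of_pos_right _ hp.pos))
    (fun n _ => hv.adj_unroll haut hk ht n) hclosed (hv.injOn_unroll hC hp hf ht hpt)
  refine ⟨_, w, hw, hlen, fun y hy => ?_⟩
  obtain ⟨n, -, rfl⟩ := (hsupp y).1 hy
  rw [orbitProj_unroll hv]
  exact Walk.getVert_mem_support _ _

theorem IsLift.exists_disjoint_isCycle [Finite V] (hC : C.IsCycle) (hv : IsLift C v)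
    (haut : ∀ u v : V, X.Adj (f u) (f v) ↔ X.Adj u v) (hp : 0 < p)
    (hf : ∀ x, minimalPeriod f x = p) (hclosed : v C.length = v 0) :
    ∃ (vs : Fin p → V) (ws : ∀ i, X.Walk (vs i) (vs i)),
      (∀ i, (ws i).IsCycle ∧ (ws i).length = C.length ∧
        ∀ x ∈ (ws i).support, orbitProj f x ∈ C.support) ∧
      (∀ i j, i ≠ j → List.Disjoint (ws i).support (ws j).support) ∧
      (∀ x : V, orbitProj f x ∈ C.support → ∃ i, x ∈ (ws i).support) := by
  have hW (j : Fin p) : ∃ w : X.Walk ((f ^ (j : ℕ)) (v 0)) ((f ^ (j : ℕ)) (v 0)),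
      w.IsCycle ∧ w.length = C.length ∧
        ∀ x, x ∈ w.support ↔ ∃ i < C.length, (f ^ (j : ℕ)) (v i) = x :=
    exists_isCycle_of_injOn (fun i => (f ^ (j : ℕ)) (v i)) hC.three_le_length
      (fun i hi => (adj_pow_apply_iff haut _).2 (hv.adj i hi)) (by simp only [hclosed])
      fun i hi i' hi' h => hv.eq_of_orbitProj_eq hC hi hi' (congrArg _ ((f ^ (j : ℕ)).injective h))
  choose ws hws hlen hsupp using hW
  refine ⟨_, ws, fun j => ⟨hws j, hlen j, fun x hx => ?_⟩, fun j j' hne x hx hx' => ?_,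
    fun x hx => ?_⟩
  · obtain ⟨i, -, rfl⟩ := (hsupp j x).1 hx
    rw [orbitProj_pow_apply, hv.orbitProj_eq]
    exact Walk.getVert_mem_support _ _
  · obtain ⟨i, hi, rfl⟩ := (hsupp j x).1 hx
    obtain ⟨i', hi', h⟩ := (hsupp j' _).1 hx'
    obtain rfl := hv.eq_of_orbitProj_eq hC hi' hi (by
      rw [← orbitProj_pow_apply (j' : ℕ), h, orbitProj_pow_apply])
    exact hne (Fin.ext (((Equiv.Perm.pow_apply_eq_pow_apply_iff hf hp).1 h).symm.eq_of_lt_of_lt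
      j.2 j'.2))
  · obtain ⟨i, hi, hix⟩ := hC.exists_getVert_eq hx
    obtain ⟨j, hj, rfl⟩ := exists_lt_pow_apply_eq hf hp (hix.symm.trans (hv.orbitProj_eq i).symm)
    exact ⟨⟨j, hj⟩, (hsupp _ _).2 ⟨i, hi, rfl⟩⟩

end CycleLift

section Valency

variable {V : Type*} {X : SimpleGraph V} {f : Equiv.Perm V} {p : ℕ}

/-- `d(S, S') = 1`: the bipartite graph `X[S, S']` is a perfect matching. -/
def ValencyOne (X : SimpleGraph V) (f : Equiv.Perm V)
    (S S' : MulAction.orbitRel.Quotient (Subgroup.zpowers f) V) : Prop :=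
  ∀ a, orbitProj f a = S → ∃! b, orbitProj f b = S' ∧ X.Adj a b

variable {S S' : MulAction.orbitRel.Quotient (Subgroup.zpowers f) V} [Finite V]

theorem ValencyOne.symm (h : ValencyOne X f S S') (haut : ∀ u v : V, X.Adj (f u) (f v) ↔ X.Adj u v)
    (hf : ∀ x, minimalPeriod f x = p) (hSS' : (orbitQuotientGraph X f).Adj S S') :
    ValencyOne X f S' S := by
  intro b hb
  obtain ⟨a, ha, hab⟩ := exists_adj_of_orbitQuotientGraph_adj haut hSS'.symm hb
  refine ⟨a, ⟨ha, hab⟩, fun a' ⟨ha', ha'b⟩ => ?_⟩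
  obtain ⟨s, rfl⟩ := orbitProj_eq_orbitProj_iff.1 (ha'.trans ha.symm)
  have hfix : (f ^ s) b = b := (h _ ha').unique
    ⟨by rw [orbitProj_pow_apply, hb], (adj_pow_apply_iff haut s).2 hab.symm⟩ ⟨hb, ha'b.symm⟩
  exact (Equiv.Perm.pow_apply_eq_self_iff hf).2 ((Equiv.Perm.pow_apply_eq_self_iff hf).1 hfix)

theorem valencyOne_of_mem_edges {A B : MulAction.orbitRel.Quotient (Subgroup.zpowers f) V}
    {C : (orbitQuotientGraph X f).Walk A B} (haut : ∀ u v : V, X.Adj (f u) (f v) ↔ X.Adj u v)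
    (hf : ∀ x, minimalPeriod f x = p)
    (hC : ∀ i < C.length, ValencyOne X f (C.getVert i) (C.getVert (i + 1)))
    (h : s(S, S') ∈ C.edges) : ValencyOne X f S S' := by
  obtain ⟨i, hi, he⟩ := (Walk.mk_mem_edges_iff_exists C).1 h
  rcases Sym2.eq_iff.1 he with ⟨rfl, rfl⟩ | ⟨rfl, rfl⟩
  · exact hC i hi
  · exact (hC i hi).symm haut hf (C.adj_getVert_succ hi)

theorem exists_adj_pow_apply_of_not_valencyOne (haut : ∀ u v : V, X.Adj (f u) (f v) ↔ X.Adj u v)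
    (hf : ∀ x, minimalPeriod f x = p) (hSS' : (orbitQuotientGraph X f).Adj S S')
    (h : ¬ValencyOne X f S S') {x y : V} (hx : orbitProj f x = S) (hy : orbitProj f y = S') :
    ∃ s, ¬p ∣ s ∧ X.Adj x ((f ^ s) y) := by
  obtain ⟨a, ha, hnu⟩ := not_forall₂.1 h
  obtain ⟨b, hb, hab⟩ := exists_adj_of_orbitQuotientGraph_adj haut hSS' ha
  obtain ⟨b', ⟨hb', hab'⟩, hne⟩ : ∃ b', (orbitProj f b' = S' ∧ X.Adj a b') ∧ b' ≠ b := by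
    by_contra! hcon
    exact hnu ⟨b, ⟨hb, hab⟩, hcon⟩
  obtain ⟨n, rfl⟩ := orbitProj_eq_orbitProj_iff.1 (hx.trans ha.symm)
  obtain ⟨d, hd, hxd, hdy⟩ : ∃ d, orbitProj f d = S' ∧ X.Adj ((f ^ n) a) d ∧ d ≠ y := by
    by_cases hby : (f ^ n) b = y
    · exact ⟨(f ^ n) b', by rw [orbitProj_pow_apply, hb'], (adj_pow_apply_iff haut n).2 hab',
        fun h => hne ((f ^ n).injective (h.trans hby.symm))⟩
    · exact ⟨(f ^ n) b, by rw [orbitProj_pow_apply, hb], (adj_pow_apply_iff haut n).2 hab, hby⟩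
  obtain ⟨s, rfl⟩ := orbitProj_eq_orbitProj_iff.1 (hd.trans hy.symm)
  exact ⟨s, fun hs => hdy ((Equiv.Perm.pow_apply_eq_self_iff hf).2 hs), hxd⟩

end Valency

theorem stmt_2_general (V : Type*) [Fintype V] (X : SimpleGraph V) (f : Equiv.Perm V)
    (haut : ∀ u v : V, X.Adj (f u) (f v) ↔ X.Adj u v)
    (p : ℕ) (hp : p.Prime)
    (hsemireg : ∀ v : V, Nat.card (MulAction.orbit (Subgroup.zpowers f) v) = p)
    (k : ℕ) (A : Quotient (MulAction.orbitRel (Subgroup.zpowers f) V))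
    (C : (orbitQuotientGraph X f).Walk A A) (hC : C.IsCycle) (hk : C.length = k) :
    (∃ (v : V) (w : X.Walk v v), w.IsCycle ∧ w.length = k * p ∧
        ∀ x ∈ w.support, orbitProj f x ∈ C.support) ∨
    ((∃ (vs : Fin p → V) (ws : ∀ i, X.Walk (vs i) (vs i)),
        (∀ i, (ws i).IsCycle ∧ (ws i).length = k ∧
          ∀ x ∈ (ws i).support, orbitProj f x ∈ C.support) ∧
        (∀ i j, i ≠ j → List.Disjoint (ws i).support (ws j).support) ∧
        (∀ x : V, orbitProj f x ∈ C.support → ∃ i, x ∈ (ws i).support)) ∧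
      ∀ S S' : Quotient (MulAction.orbitRel (Subgroup.zpowers f) V),
        s(S, S') ∈ C.edges → ∀ a : V, orbitProj f a = S →
          ∃! b : V, orbitProj f b = S' ∧ X.Adj a b) := by
  subst hk
  have hf (x : V) : minimalPeriod f x = p := (f.minimalPeriod_eq_natCard_orbit x).trans (hsemireg x)
  obtain ⟨a, ha⟩ := Quotient.exists_rep A
  obtain ⟨v, hv, -⟩ := exists_isLift haut C ha
  obtain ⟨r, hr⟩ : ∃ r, (f ^ r) (v 0) = v C.length := orbitProj_eq_orbitProj_iff.1 <| by
    rw [hv.orbitProj_eq, hv.orbitProj_eq, Walk.getVert_length, Walk.getVert_zero]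
  by_cases hpr : p ∣ r
  · have hclosed : v C.length = v 0 := hr ▸ (Equiv.Perm.pow_apply_eq_self_iff hf).2 hpr
    by_cases hval : ∀ i < C.length, ValencyOne X f (C.getVert i) (C.getVert (i + 1))
    · exact .inr ⟨hv.exists_disjoint_isCycle hC haut hp.pos hf hclosed,
        fun S S' h => valencyOne_of_mem_edges haut hf hval h⟩
    obtain ⟨i, hi, hnot⟩ := not_forall₂.1 hval
    obtain ⟨s, hps, hs⟩ := exists_adj_pow_apply_of_not_valencyOne haut hf (C.adj_getVert_succ hi)
      hnot (hv.orbitProj_eq i) (hv.orbitProj_eq (i + 1))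
    obtain ⟨v', hv', h0, hlen⟩ := hv.twist haut hi hs
    exact .inl (hv'.exists_isCycle_length_mul hC haut hp hf (by rw [hlen, h0, hclosed]) hps)
  · exact .inl (hv.exists_isCycle_length_mul hC haut hp hf hr hpr)

/-- Marušič's lifting lemma: for an `(m,p)`-semiregular automorphism `ρ = f` of `X`
(`p` prime) and a `k`-cycle `C` in the quotient graph, the subgraph of `X` induced by the
union of the orbits in `C` either contains a cycle of length `kp`, or consists of `p`
disjoint `k`-cycles; in the latter case `d(S,S') = 1` for every edge `{S,S'}` of `C`. -/
theorem stmt_2 (V : Type*) [Fintype V] (X : SimpleGraph V) (f : Equiv.Perm V)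
    (haut : ∀ u v : V, X.Adj (f u) (f v) ↔ X.Adj u v)
    (p m : ℕ) (hp : p.Prime)
    (hsemireg : ∀ v : V, Nat.card (MulAction.orbit (Subgroup.zpowers f) v) = p)
    (hm : Nat.card (Quotient (MulAction.orbitRel (Subgroup.zpowers f) V)) = m)
    (k : ℕ) (A : Quotient (MulAction.orbitRel (Subgroup.zpowers f) V))
    (C : (orbitQuotientGraph X f).Walk A A) (hC : C.IsCycle) (hk : C.length = k) :
    (∃ (v : V) (w : X.Walk v v), w.IsCycle ∧ w.length = k * p ∧
        ∀ x ∈ w.support, orbitProj f x ∈ C.support) ∨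
    ((∃ (vs : Fin p → V) (ws : ∀ i, X.Walk (vs i) (vs i)),
        (∀ i, (ws i).IsCycle ∧ (ws i).length = k ∧
          ∀ x ∈ (ws i).support, orbitProj f x ∈ C.support) ∧
        (∀ i j, i ≠ j → List.Disjoint (ws i).support (ws j).support) ∧
        (∀ x : V, orbitProj f x ∈ C.support → ∃ i, x ∈ (ws i).support)) ∧
      ∀ S S' : Quotient (MulAction.orbitRel (Subgroup.zpowers f) V),
        s(S, S') ∈ C.edges → ∀ a : V, orbitProj f a = S →
          ∃! b : V, orbitProj f b = S' ∧ X.Adj a b) :=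
  stmt_2_general V X f haut p hp hsemireg k A C hC hk
end

section
/- Let T be a finite group with a subgroup H of index t, let D = HgH ∪ Hg⁻¹H for some g ∈ T \ H, and suppose the coset graph X = X(T, H, D) has a Hamilton cycle. Let G = T × ⟨c⟩ where c has prime order p with gcd(t, p) = 1. Then the coset graph Y₁ = X(G, H, Dc ∪ Dc⁻¹) has a Hamilton cycle. -/
open Pointwise

/-- The coset graph `X(G, H, D)` on the right cosets of `H` in `G`:
`Hx ∼ Hy` iff the cosets are distinct and `y * x⁻¹ ∈ D` (symmetrized). -/
def cosetGraph (G : Type*) [Group G] (H : Subgroup G) (D : Set G) :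
    SimpleGraph (Quotient (QuotientGroup.rightRel H)) where
  Adj A B := A ≠ B ∧ ∃ x y : G, Quotient.mk _ x = A ∧ Quotient.mk _ y = B ∧
      (y * x⁻¹ ∈ D ∨ x * y⁻¹ ∈ D)
  symm := ⟨by
    rintro A B ⟨hne, x, y, hx, hy, h⟩
    exact ⟨hne.symm, y, x, hy, hx, h.symm⟩⟩
  loopless := ⟨by rintro A ⟨hne, _⟩; exact hne rfl⟩

/-- A graph has a Hamilton cycle. -/
def HasHamiltonCycle {V : Type*} (X : SimpleGraph V) : Prop :=
  letI := Classical.decEq V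
  ∃ (v : V) (w : X.Walk v v), w.IsHamiltonianCycle

/-!
A Hamilton cycle of `X` lists the cosets of `H` as `v 0, v 1, …` around `ZMod t`. The cosets of
`H × 1` in `T × ⟨c⟩` are the pairs `(v i, c ^ j)`, and multiplying a step of that cycle by `c` in
the second coordinate gives an edge `(v i, c ^ j) ∼ (v (i + 1), c ^ (j + 1))` of `Y₁`. Walking
diagonally around this `t × p` torus visits every pair exactly once, because
`ZMod (t * p) ≃ ZMod t × ZMod p` when `gcd(t, p) = 1`.
-/

namespace SimpleGraph

variable {V : Type*} {G : SimpleGraph V}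

lemma Walk.getVert_mod_length {v : V} (w : G.Walk v v) {i : ℕ} (hi : i ≤ w.length) :
    w.getVert (i % w.length) = w.getVert i := by
  rcases hi.lt_or_eq with hi | rfl
  · rw [Nat.mod_eq_of_lt hi]
  · rw [Nat.mod_self, Walk.getVert_zero, Walk.getVert_length]

lemma Walk.IsHamiltonianCycle.exists_equiv_zmod [DecidableEq V] {v : V} {w : G.Walk v v}
    (hw : w.IsHamiltonianCycle) : ∃ e : ZMod w.length ≃ V, ∀ k, G.Adj (e k) (e (k + 1)) := by
  have := hw.finite
  have : Fintype V := Fintype.ofFinite V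
  have h3 := hw.isCycle.three_le_length
  have : NeZero w.length := ⟨by omega⟩
  let f : ZMod w.length → V := fun k => w.getVert k.val
  have hsurj : f.Surjective := by
    intro u
    obtain ⟨i, rfl, hi⟩ := Walk.mem_support_iff_exists_getVert.1 (hw.mem_support u)
    exact ⟨i, by simp [f, ZMod.val_natCast, w.getVert_mod_length hi]⟩
  have hcard : Nat.card (ZMod w.length) ≤ Nat.card V := by
    rw [Nat.card_zmod, hw.length_eq, Nat.card_eq_fintype_card]
  refine ⟨Equiv.ofBijective f (hsurj.bijective_of_nat_card_le hcard), fun k => ?_⟩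
  have hsucc : (k + 1).val = (k.val + 1) % w.length := by
    rw [ZMod.val_add, ZMod.val_one'' (by omega)]
  change G.Adj (w.getVert k.val) (w.getVert (k + 1).val)
  rw [hsucc, w.getVert_mod_length k.val_lt]
  exact w.adj_getVert_succ k.val_lt

lemma hasHamiltonCycle_of_equiv_zmod {n : ℕ} (hn : 3 ≤ n) (e : ZMod n ≃ V)
    (he : ∀ k, G.Adj (e k) (e (k + 1))) : HasHamiltonCycle G := by
  obtain ⟨m, rfl⟩ : ∃ m, n = m + 3 := ⟨n - 3, by omega⟩
  let φ : cycleGraph (m + 3) →g G := ⟨e, fun {a b} hab => by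
    rcases cycleGraph_adj.1 hab with h | h
    · rw [sub_eq_iff_eq_add'.1 h]; exact (he b).symm
    · rw [sub_eq_iff_eq_add'.1 h]; exact he a⟩
  classical
  have hcycle : (cycleGraph.cycle m).IsHamiltonianCycle :=
    Walk.isHamiltonianCycle_iff_isCycle_and_length_eq.2
      ⟨cycleGraph.isCycle_cycle, by simp [cycleGraph.length_cycle]⟩
  exact ⟨_, _, hcycle.map (f := φ) e.bijective⟩

lemma hasHamiltonCycle_iff_exists_equiv_zmod :
    HasHamiltonCycle G ↔ ∃ n, 3 ≤ n ∧ ∃ e : ZMod n ≃ V, ∀ k, G.Adj (e k) (e (k + 1)) := by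
  classical
  refine ⟨fun ⟨_, w, hw⟩ => ?_, fun ⟨n, hn, e, he⟩ => hasHamiltonCycle_of_equiv_zmod hn e he⟩
  exact ⟨w.length, hw.isCycle.three_le_length, hw.exists_equiv_zmod⟩

lemma hasHamiltonCycle_of_equiv_zmod_prod {n m : ℕ} (hnm : n.Coprime m) (h3 : 3 ≤ n * m)
    (e : ZMod n × ZMod m ≃ V) (he : ∀ x, G.Adj (e x) (e (x + 1))) : HasHamiltonCycle G :=
  hasHamiltonCycle_of_equiv_zmod h3 ((ZMod.chineseRemainder hnm).toEquiv.trans e) fun k => by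
    simpa using he (ZMod.chineseRemainder hnm k)

end SimpleGraph

lemma pow_zmod_val_add_one {C : Type*} [LeftCancelMonoid C] (c : C) [NeZero (orderOf c)]
    (k : ZMod (orderOf c)) : c ^ (k + 1).val = c * c ^ k.val := by
  rw [← pow_succ', pow_eq_pow_iff_modEq, ← ZMod.natCast_eq_natCast_iff]
  simp

open QuotientGroup

section CosetGraphProd

variable {T C : Type*} [Group T] [Group C] {H : Subgroup T}

lemma mk_prod_bot_eq_mk_prod_bot_iff {x y : T} {a b : C} :
    Quotient.mk (rightRel (H.prod (⊥ : Subgroup C))) (x, a) = Quotient.mk _ (y, b) ↔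
      Quotient.mk (rightRel H) x = Quotient.mk _ y ∧ a = b := by
  simp [Quotient.eq, rightRel_apply, Subgroup.mem_prod, mul_inv_eq_one, eq_comm]

lemma cosetGraph_prod_adj_mul_left {D : Set T} (c : C) {x y : T} (a : C)
    (h : (cosetGraph T H D).Adj (Quotient.mk _ x) (Quotient.mk _ y)) :
    (cosetGraph (T × C) (H.prod ⊥) ((fun x => (x, c)) '' D ∪ (fun x => (x, c⁻¹)) '' D)).Adj
      (Quotient.mk _ (x, a)) (Quotient.mk _ (y, c * a)) := by
  obtain ⟨hne, x', y', hx, hy, hD⟩ := h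
  refine ⟨fun h => hne (mk_prod_bot_eq_mk_prod_bot_iff.1 h).1, (x', a), (y', c * a),
    mk_prod_bot_eq_mk_prod_bot_iff.2 ⟨hx, rfl⟩, mk_prod_bot_eq_mk_prod_bot_iff.2 ⟨hy, rfl⟩, ?_⟩
  rcases hD with hD | hD
  · exact Or.inl (Or.inl ⟨_, hD, by simp⟩)
  · exact Or.inr (Or.inr ⟨_, hD, by simp⟩)

lemma bijective_mk_out_pow_val {t : ℕ} (v : ZMod t ≃ Quotient (rightRel H)) {c : C}
    [NeZero (orderOf c)] (hc : ∀ x : C, x ∈ Subgroup.zpowers c) :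
    Function.Bijective fun x : ZMod t × ZMod (orderOf c) =>
      Quotient.mk (rightRel (H.prod (⊥ : Subgroup C))) ((v x.1).out, c ^ x.2.val) := by
  constructor
  · rintro ⟨a, b⟩ ⟨a', b'⟩ h
    obtain ⟨hv, hpow⟩ := mk_prod_bot_eq_mk_prod_bot_iff.1 h
    simp only [Quotient.out_eq, EmbeddingLike.apply_eq_iff_eq] at hv
    rw [pow_eq_pow_iff_modEq, ← ZMod.natCast_eq_natCast_iff, ZMod.natCast_zmod_val,
      ZMod.natCast_zmod_val] at hpow
    exact Prod.ext hv hpow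
  · rintro ⟨x, a⟩
    have hfin : IsOfFinOrder c := orderOf_pos_iff.1 (NeZero.pos _)
    obtain ⟨k, rfl⟩ := hfin.mem_powers_iff_mem_zpowers.2 (hc a)
    refine ⟨(v.symm (Quotient.mk _ x), k), mk_prod_bot_eq_mk_prod_bot_iff.2 ⟨by simp, ?_⟩⟩
    simp [ZMod.val_natCast, pow_mod_orderOf]

end CosetGraphProd

open SimpleGraph

theorem stmt_3_general (T : Type*) [Group T] (H : Subgroup T) (D : Set T)
    (hX : HasHamiltonCycle (cosetGraph T H D))
    (C : Type*) [Group C] (c : C) (hC : ∀ x : C, x ∈ Subgroup.zpowers c)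
    (p : ℕ) (hp : p.Prime) (hc : orderOf c = p)
    (hcop : Nat.gcd H.index p = 1) :
    HasHamiltonCycle (cosetGraph (T × C) (H.prod ⊥)
      ((fun x => (x, c)) '' D ∪ (fun x => (x, c⁻¹)) '' D)) := by
  obtain ⟨t, ht3, v, hv⟩ := hasHamiltonCycle_iff_exists_equiv_zmod.1 hX
  have ht : t = H.index := by
    rw [← Nat.card_zmod t, Nat.card_congr v,
      Nat.card_congr (quotientRightRelEquivQuotientLeftRel H), Subgroup.index]
  subst hc
  have : NeZero (orderOf c) := ⟨hp.ne_zero⟩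
  refine hasHamiltonCycle_of_equiv_zmod_prod (ht ▸ hcop) (ht3.trans (Nat.le_mul_of_pos_right t hp.pos))
    (Equiv.ofBijective _ (bijective_mk_out_pow_val v hC)) fun x => ?_
  simp only [Equiv.ofBijective_apply, Prod.fst_add, Prod.snd_add, Prod.fst_one, Prod.snd_one,
    pow_zmod_val_add_one]
  apply cosetGraph_prod_adj_mul_left
  simpa using hv x.1

theorem stmt_3 (T : Type*) [Group T] [Fintype T] (H : Subgroup T) (g : T) (hg : g ∉ H)
    (D : Set T) (hD : D = (H : Set T) * {g} * (H : Set T) ∪ (H : Set T) * {g⁻¹} * (H : Set T))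
    (hX : HasHamiltonCycle (cosetGraph T H D))
    (C : Type*) [Group C] (c : C) (hC : ∀ x : C, x ∈ Subgroup.zpowers c)
    (p : ℕ) (hp : p.Prime) (hc : orderOf c = p)
    (hcop : Nat.gcd H.index p = 1) :
    HasHamiltonCycle (cosetGraph (T × C) (H.prod ⊥)
      ((fun x => (x, c)) '' D ∪ (fun x => (x, c⁻¹)) '' D)) :=
  stmt_3_general T H D hX C c hC p hp hc hcop
end

section
/- (Gaschütz) Let G be a finite group, K an abelian normal subgroup of G, and B a subgroup with K ≤ B ≤ G such that gcd(|K|, [G : B]) = 1. If K has a complement in B, then K has a complement in G. -/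
/-!
Let `C ≤ B` be a complement of `K` in `B`. Then `K` acts freely on `G ⧸ C`, and its orbits are
the fibres of the projection `G ⧸ C → G ⧸ B`. For two sections `σ, τ` of this projection let
`δ σ τ ∈ K` be the product over `y ∈ G ⧸ B` of the elements of `K` moving `τ y` to `σ y`; this
needs `K` abelian. Then `δ` is multiplicative, `G`-equivariant up to conjugation, and
`δ (k • σ) σ = k ^ [G : B]`. As `k ↦ k ^ [G : B]` is a bijection of `K`, the `g` with
`δ (g • σ) σ = 1` form a complement of `K`. This is the argument for the abelian case of
Schur–Zassenhaus, with the product over `G ⧸ K` replaced by one over `G ⧸ B`.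
-/

open MulAction

namespace MulActionHom

variable {G X Y : Type*} [Group G] [MulAction G X] [MulAction G Y] {π : X →[G] Y}

variable (π) in
def Section : Type _ := {σ : Y → X // ∀ y, π (σ y) = y}

instance : MulAction G π.Section where
  smul g σ := ⟨fun y => g • σ.1 (g⁻¹ • y), fun y => by rw [map_smul, σ.2, smul_inv_smul]⟩
  one_smul σ := Subtype.ext <| funext fun y =>
    show (1 : G) • σ.1 ((1 : G)⁻¹ • y) = σ.1 y by simp
  mul_smul g h σ := Subtype.ext <| funext fun y =>
    show (g * h) • σ.1 ((g * h)⁻¹ • y) = g • h • σ.1 (h⁻¹ • g⁻¹ • y) by simp [mul_smul]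

theorem Section.smul_apply (g : G) (σ : π.Section) (y : Y) : (g • σ).1 y = g • σ.1 (g⁻¹ • y) :=
  rfl

end MulActionHom

namespace Subgroup

section Diff

variable {G S : Type*} [Group G] [MulAction G S] {K : Subgroup G} {n : ℕ}

theorem exists_isComplement'_of_diff (hn : (Nat.card K).Coprime n) (δ : S → S → K) (a : S)
    (δ_mul_δ : ∀ a b c, δ a b * δ b c = δ a c)
    (δ_smul_smul : ∀ (g : G) a b, (δ (g • a) (g • b) : G) = g * δ a b * g⁻¹)
    (δ_smul_self : ∀ (k : K) a, δ (k • a) a = k ^ n) :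
    ∃ C : Subgroup G, K.IsComplement' C := by
  have δ_self (b : S) : δ b b = 1 := mul_eq_left.mp (δ_mul_δ b b b)
  have δ_swap (b c : S) : δ b c = (δ c b)⁻¹ := eq_inv_of_mul_eq_one_left (by rw [δ_mul_δ, δ_self])
  -- the stabilizer of the class of `a` modulo the equivalence relation `δ = 1`
  let C : Subgroup G :=
    { carrier := {g | δ (g • a) a = 1}
      one_mem' := by simp [δ_self]
      mul_mem' := fun {g h} (hg : δ _ _ = 1) (hh : δ _ _ = 1) => by
        have hconj : δ (g • h • a) (g • a) = 1 := Subtype.ext (by rw [δ_smul_smul, hh]; simp)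
        rw [Set.mem_ofPred_eq, mul_smul, ← δ_mul_δ _ (g • a), hconj, hg, mul_one]
      inv_mem' := fun {g} (hg : δ _ _ = 1) => by
        have h := δ_smul_smul g⁻¹ a (g • a)
        rw [inv_smul_smul, δ_swap a, hg, inv_one, OneMemClass.coe_one, mul_one] at h
        exact Subtype.ext (h.trans (mul_inv_cancel _)) }
  refine ⟨C, isComplement'_of_disjoint_and_mul_eq_univ ?_ ?_⟩
  · rw [disjoint_def]
    intro g hgK (hgC : δ _ _ = 1)
    have : (⟨g, hgK⟩ : K) ^ n = 1 ^ n := by rw [← δ_smul_self, one_pow]; exact hgC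
    exact congrArg Subtype.val (hn.pow_left_bijective.injective this)
  · refine Set.eq_univ_of_forall fun g => ?_
    obtain ⟨k, hk : k ^ n = _⟩ := hn.pow_left_bijective.surjective (δ (g • a) a)⁻¹
    refine ⟨k⁻¹, k⁻¹.2, k * g, ?_, by simp⟩
    change δ ((k * g) • a) a = 1
    rw [← δ_mul_δ _ (g • a), mul_smul, ← smul_def, δ_smul_self, hk, inv_mul_cancel]

end Diff

section OrbitDiff

variable {G X : Type*} [Group G] [MulAction G X] {K : Subgroup G}

variable (K) in
/-- Meaningful only for `x ∈ orbit K x'`; otherwise `Classical.epsilon` picks an arbitrary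
element. -/
noncomputable def orbitDiff (x x' : X) : K := Classical.epsilon fun k : K => k • x' = x

theorem orbitDiff_smul {x x' : X} (h : x ∈ orbit K x') : K.orbitDiff x x' • x' = x :=
  Classical.epsilon_spec (mem_orbit_iff.mp h)

theorem orbitDiff_eq (hfree : ∀ (k : K) (x : X), k • x = x → k = 1) {x x' : X} {k : K}
    (h : k • x' = x) : K.orbitDiff x x' = k := by
  have hx : x ∈ orbit K x' := mem_orbit_iff.mpr ⟨k, h⟩
  refine (inv_mul_eq_one.mp (hfree _ x' ?_)).symm
  rw [mul_smul, orbitDiff_smul hx, ← h, inv_smul_smul]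

theorem orbitDiff_smul_self (hfree : ∀ (k : K) (x : X), k • x = x → k = 1) (k : K) (x : X) :
    K.orbitDiff (k • x) x = k :=
  orbitDiff_eq hfree rfl

theorem orbitDiff_mul_orbitDiff (hfree : ∀ (k : K) (x : X), k • x = x → k = 1) {x x' x'' : X}
    (h : x ∈ orbit K x') (h' : x' ∈ orbit K x'') :
    K.orbitDiff x x' * K.orbitDiff x' x'' = K.orbitDiff x x'' :=
  (orbitDiff_eq hfree (by rw [mul_smul, orbitDiff_smul h', orbitDiff_smul h])).symm

theorem orbitDiff_smul_smul [K.Normal] (hfree : ∀ (k : K) (x : X), k • x = x → k = 1)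
    {x x' : X} (h : x ∈ orbit K x') (g : G) :
    K.orbitDiff (g • x) (g • x') = MulAut.conjNormal g (K.orbitDiff x x') := by
  refine orbitDiff_eq hfree ?_
  rw [smul_def, MulAut.conjNormal_apply, mul_smul, mul_smul, inv_smul_smul, ← smul_def,
    orbitDiff_smul h]

end OrbitDiff

section Fibers

open scoped IsMulCommutative

variable {G X Y : Type*} [Group G] [MulAction G X] [MulAction G Y] [Fintype Y] {K : Subgroup G}

theorem exists_isComplement'_of_fibers_eq_orbits [K.Normal] [IsMulCommutative K]
    (π : X →[G] Y) (hπ : Function.Surjective π) (hfib : ∀ x x', π x = π x' ↔ x ∈ orbit K x')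
    (hfree : ∀ (k : K) (x : X), k • x = x → k = 1) (hcop : (Nat.card K).Coprime (Fintype.card Y)) :
    ∃ C : Subgroup G, K.IsComplement' C := by
  have mem_orbit (σ τ : π.Section) (y : Y) : σ.1 y ∈ orbit K (τ.1 y) :=
    (hfib _ _).mp (by rw [σ.2, τ.2])
  refine exists_isComplement'_of_diff hcop
    (fun σ τ : π.Section => ∏ y, K.orbitDiff (σ.1 y) (τ.1 y))
    (⟨Function.surjInv hπ, Function.surjInv_eq hπ⟩ : π.Section) ?_ ?_ ?_
  · intro σ τ ρ
    simp only [← Finset.prod_mul_distrib,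
      orbitDiff_mul_orbitDiff hfree (mem_orbit σ τ _) (mem_orbit τ ρ _)]
  · intro g σ τ
    simp only [MulActionHom.Section.smul_apply, orbitDiff_smul_smul hfree (mem_orbit σ τ _),
      ← map_prod, ← MulAut.conjNormal_apply]
    congr 2
    exact Equiv.prod_comp (MulAction.toPerm g⁻¹) fun y => K.orbitDiff (σ.1 y) (τ.1 y)
  · intro k σ
    have hk (y : Y) : (k : G)⁻¹ • y = y := by
      rw [← σ.2 y, ← map_smul]
      exact (hfib _ _).mpr (mem_orbit_iff.mpr ⟨k⁻¹, rfl⟩)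
    calc ∏ y, K.orbitDiff ((k • σ).1 y) (σ.1 y)
        = ∏ _y : Y, k := Finset.prod_congr rfl fun y _ => by
          rw [smul_def k σ, MulActionHom.Section.smul_apply, hk, ← smul_def]
          exact orbitDiff_smul_self hfree k _
      _ = k ^ Fintype.card Y := Finset.prod_const k

end Fibers

section Complement

variable {G : Type*} [Group G] {K B : Subgroup G} [K.Normal] {C : Subgroup B}

theorem eq_one_of_smul_eq_self_of_isComplement' (hC : (K.subgroupOf B).IsComplement' C) (k : K)
    (x : G ⧸ C.map B.subtype) (h : k • x = x) : k = 1 := by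
  induction x using QuotientGroup.induction_on with | H g => ?_
  have hconj : g⁻¹ * k * g ∈ C.map B.subtype := by
    simpa [smul_def, mul_assoc] using QuotientGroup.eq.mp h.symm
  obtain ⟨c, hc, hcg⟩ := mem_map.mp hconj
  have hcK : c ∈ K.subgroupOf B := by
    rw [mem_subgroupOf, ← B.subtype_apply, hcg]
    exact ‹K.Normal›.conj_mem' k k.2 g
  have hc1 : c = 1 := disjoint_def.mp hC.disjoint hcK hc
  rw [hc1, map_one] at hcg
  exact Subtype.ext (by simpa [eq_comm, mul_assoc, inv_mul_eq_one] using hcg)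

theorem quotientMapOfLE_eq_iff_mem_orbit (hKB : K ≤ B) (hC : (K.subgroupOf B).IsComplement' C)
    (x x' : G ⧸ C.map B.subtype) :
    quotientMapOfLE (map_subtype_le C) x = quotientMapOfLE (map_subtype_le C) x' ↔
      x ∈ orbit K x' := by
  induction x using QuotientGroup.induction_on with | H g => ?_
  induction x' using QuotientGroup.induction_on with | H g' => ?_
  rw [quotientMapOfLE_apply_mk, quotientMapOfLE_apply_mk, mem_orbit_iff]
  constructor
  · intro h
    obtain ⟨⟨⟨k, hk⟩, ⟨c, hc⟩⟩, hkc⟩ := (hC.existsUnique ⟨_, QuotientGroup.eq.mp h.symm⟩).exists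
    replace hkc : (k : G) * c = g'⁻¹ * g := congrArg Subtype.val hkc
    refine ⟨⟨g' * k * g'⁻¹, ‹K.Normal›.conj_mem _ (mem_subgroupOf.mp hk) g'⟩, ?_⟩
    change ((g' * k * g'⁻¹ * g' : G) : G ⧸ C.map B.subtype) = g
    rw [QuotientGroup.eq]
    have hc' : (g' * k * g'⁻¹ * g')⁻¹ * g = c := by
      rw [inv_mul_cancel_right, mul_inv_rev, mul_assoc, ← hkc, inv_mul_cancel_left]
    exact hc' ▸ mem_map_of_mem B.subtype hc
  · rintro ⟨k, hk⟩
    have hπk : ((k * g' : G) : G ⧸ B) = g := congrArg (quotientMapOfLE (map_subtype_le C)) hk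
    rw [← hπk, QuotientGroup.eq]
    refine hKB ?_
    simpa [mul_assoc] using ‹K.Normal›.conj_mem _ (K.inv_mem k.2) g'⁻¹

end Complement

end Subgroup

/-- Gaschütz' theorem: if `K` is an abelian normal subgroup of a finite group `G`,
`K ≤ B ≤ G` with `gcd(|K|, [G:B]) = 1`, and `K` has a complement in `B`, then
`K` has a complement in `G`. -/
theorem stmt_14 (G : Type*) [Group G] [Finite G] (K B : Subgroup G) [K.Normal]
    (hKB : K ≤ B) (hcomm : ∀ x ∈ K, ∀ y ∈ K, x * y = y * x)
    (hcop : Nat.gcd (Nat.card K) B.index = 1)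
    (hB : ∃ C : Subgroup B, (K.subgroupOf B).IsComplement' C) :
    ∃ C : Subgroup G, K.IsComplement' C := by
  obtain ⟨C, hC⟩ := hB
  have : IsMulCommutative K := ⟨⟨fun a b => Subtype.ext (hcomm a a.2 b b.2)⟩⟩
  let : Fintype (G ⧸ B) := Fintype.ofFinite _
  let π : G ⧸ C.map B.subtype →[G] G ⧸ B :=
    { toFun := Subgroup.quotientMapOfLE (Subgroup.map_subtype_le C)
      map_smul' := fun _ x => Quotient.inductionOn' x fun _ => rfl }
  refine Subgroup.exists_isComplement'_of_fibers_eq_orbits π ?_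
    (Subgroup.quotientMapOfLE_eq_iff_mem_orbit hKB hC)
    (Subgroup.eq_one_of_smul_eq_self_of_isComplement' hC) ?_
  · exact fun y => QuotientGroup.induction_on y fun g => ⟨g, rfl⟩
  · rwa [← Nat.card_eq_fintype_card, ← Subgroup.index_eq_card]
end
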